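/- Let I be a finite set, X ⊆ Y₂ × I² and Z its complement in Y₂ × I². With X_n and Z_n defined as the sets of I-labelled planar binary rooted trees with n vertices all of whose 2-vertex local patterns lie in X (resp. Z), the alternating generating series f(X,t) = ∑_{n≥0} (−1)^{n+1} (#X_n) t^{n+1} and f(Z,t) = ∑_{n≥0} (−1)^{n+1} (#Z_n) t^{n+1} satisfy f(X, f(Z,t)) = t as formal power series over ℚ. -/

import Mathlib

/-- Planar binary rooted trees with internal vertices labelled by `I`. -/
inductive PBTree (I : Type) : Type
  | leaf : PBTree I
  | node : PBTree I → I → PBTree I → PBTree I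

/-- The two planar binary trees with 2 vertices: `L` (left comb) and `R` (right comb). -/
inductive Side : Type
  | L : Side
  | R : Side

namespace PBTree

variable {I : Type}

/-- The number of internal vertices of a tree. -/
def vertices : PBTree I → ℕ
  | leaf => 0
  | node l _ r => l.vertices + r.vertices + 1

/-- The set of local patterns of a labelled tree: each pair of adjacent internal vertices,
with labels `i` (lower vertex) and `j` (upper vertex), contributes `(L, i, j)` if the upper
vertex is the left child and `(R, i, j)` if it is the right child. -/
def patterns : PBTree I → Set (Side × I × I)
  | leaf => ∅
  | node l i r =>
      l.patterns ∪ r.patterns ∪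
      (match l with
        | leaf => ∅
        | node _ j _ => {(Side.L, i, j)}) ∪
      (match r with
        | leaf => ∅
        | node _ j _ => {(Side.R, i, j)})

/-- `treeSet X n` is the set `X_n` of labelled trees with `n` vertices all of whose
local patterns lie in `X`. -/
def treeSet (X : Set (Side × I × I)) (n : ℕ) : Set (PBTree I) :=
  {t : PBTree I | t.vertices = n ∧ t.patterns ⊆ X}

end PBTree

open PBTree

/-- The alternating generating series `f(X,t) = ∑_{n≥0} (−1)^{n+1} (#X_n) t^{n+1}` of a set
`X` of local patterns. -/
noncomputable def genSeries {I : Type} (X : Set (Side × I × I)) : PowerSeries ℚ :=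
  PowerSeries.mk fun m =>
    if m = 0 then 0 else (-1 : ℚ) ^ m * ((PBTree.treeSet X (m - 1)).ncard : ℚ)

/-- Composition `f(g)` of formal power series (intended for `g` with zero constant term). -/
noncomputable def pcomp (f g : PowerSeries ℚ) : PowerSeries ℚ :=
  PowerSeries.mk fun n =>
    ∑ k ∈ Finset.range (n + 1), (PowerSeries.coeff (R := ℚ) k f) * (PowerSeries.coeff (R := ℚ) n (g ^ k))

/-!
Let `C^P_i` count the trees all of whose local patterns lie in `P` with root label `i`, by
number of vertices. Cutting a tree at its root gives
`C^P_i = t (1 + ∑_{(L,i,j) ∈ P} C^P_j) (1 + ∑_{(R,i,j) ∈ P} C^P_j)`,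
and `f(P,t) = -t (1 + ∑_i C^P_i(-t))`.

Put `U = 1 + ∑_i C^Z_i` and `H = t U`, so that `f(Z,t) = H(-t)`. As `Z` is the complement of `X`,
`1 + ∑_{(s,i,j) ∈ Z} C^Z_j = U - ∑_{(s,i,j) ∈ X} C^Z_j`; hence both `C^Z_i` and `-U · C^X_i(-H)`
solve `y_i = t (U - ∑_{(L,i,j) ∈ X} y_j) (U - ∑_{(R,i,j) ∈ X} y_j)`, a system whose solution is
unique because it determines coefficients recursively. Therefore
`f(X,H) = -t U (1 + ∑_i C^X_i(-H)) = -t (U - ∑_i C^Z_i) = -t`, and substituting `-t` for `t`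
gives `f(X, f(Z,t)) = t`.
-/

open PowerSeries Finset

namespace PBTree

variable {I : Type}

def root? : PBTree I → Option I
  | leaf => none
  | node _ i _ => some i

theorem patterns_node_subset_iff {l r : PBTree I} {i : I} {P : Set (Side × I × I)} :
    (node l i r).patterns ⊆ P ↔ l.patterns ⊆ P ∧ r.patterns ⊆ P ∧
      (∀ j ∈ l.root?, (Side.L, i, j) ∈ P) ∧ (∀ j ∈ r.root?, (Side.R, i, j) ∈ P) := by
  rw [patterns.eq_def]
  cases l <;> cases r <;>
    simp [root?, patterns.eq_1, Set.insert_subset_iff, Set.union_subset_iff] <;> tauto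

noncomputable section
open scoped Classical

variable [Fintype I]

def treesOfHeightLE (I : Type) [Fintype I] : ℕ → Finset (PBTree I)
  | 0 => {leaf}
  | n + 1 => insert leaf
      ((treesOfHeightLE I n ×ˢ (univ ×ˢ treesOfHeightLE I n)).image
        fun x => node x.1 x.2.1 x.2.2)

theorem mem_treesOfHeightLE_of_vertices_le {t : PBTree I} {n : ℕ} (h : t.vertices ≤ n) :
    t ∈ treesOfHeightLE I n := by
  induction t generalizing n with
  | leaf => cases n <;> simp [treesOfHeightLE]
  | node l i r ihl ihr =>
    simp only [vertices] at h
    obtain ⟨m, rfl⟩ : ∃ m, n = m + 1 := ⟨n - 1, by omega⟩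
    simp only [treesOfHeightLE, mem_insert, reduceCtorEq, mem_image, mem_product, mem_univ,
      true_and, false_or]
    exact ⟨(l, i, r), ⟨ihl (by omega), ihr (by omega)⟩, rfl⟩

variable (P : Set (Side × I × I))

def admissible (n : ℕ) : Finset (PBTree I) :=
  {t ∈ treesOfHeightLE I n | t.vertices = n ∧ t.patterns ⊆ P}

variable {P} in
theorem mem_admissible {n : ℕ} {t : PBTree I} :
    t ∈ admissible P n ↔ t.vertices = n ∧ t.patterns ⊆ P := by
  simp only [admissible, mem_filter, and_iff_right_iff_imp]
  exact fun h => mem_treesOfHeightLE_of_vertices_le h.1.le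

theorem ncard_treeSet (n : ℕ) : (treeSet P n).ncard = #(admissible P n) := by
  rw [← Set.ncard_coe_finset]
  congr 1
  ext t
  simp [treeSet, mem_admissible]

theorem card_admissible_filter_forall_root (Q : I → Prop) (n : ℕ) :
    #{t ∈ admissible P n | ∀ j ∈ t.root?, Q j} =
      (if n = 0 then 1 else 0) + ∑ j with Q j, #{t ∈ admissible P n | t.root? = some j} := by
  rw [card_eq_sum_card_fiberwise (f := root?) (t := univ) (fun _ _ => mem_univ _),
    Fintype.sum_option, sum_filter]
  congr 1
  · have hleaf : ∀ t : PBTree I, ((∀ j ∈ t.root?, Q j) ∧ t.root? = none) ↔ t = leaf := by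
      rintro (_ | _) <;> simp [root?]
    rw [filter_filter, filter_congr fun t _ => hleaf t, card_filter, sum_ite_eq']
    simp [mem_admissible, vertices, patterns.eq_1, eq_comm]
  · refine sum_congr rfl fun j _ => ?_
    split_ifs with hj
    · congr 1
      ext t
      simp only [mem_filter]
      constructor
      · tauto
      · rintro ⟨ht, hroot⟩
        exact ⟨⟨ht, by simp [hroot, hj]⟩, hroot⟩
    · simp only [card_eq_zero, filter_eq_empty_iff, mem_filter]
      rintro t ⟨-, hQ⟩ hroot
      exact hj (hQ j (by simp [hroot]))

theorem card_admissible_root_eq_some_succ (n : ℕ) (i : I) :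
    #{t ∈ admissible P (n + 1) | t.root? = some i} =
      ∑ pq ∈ antidiagonal n, #{l ∈ admissible P pq.1 | ∀ j ∈ l.root?, (Side.L, i, j) ∈ P} *
        #{r ∈ admissible P pq.2 | ∀ j ∈ r.root?, (Side.R, i, j) ∈ P} := by
  simp only [← card_product]
  rw [← card_sigma]
  symm
  refine card_bij (fun x _ => node x.2.1 i x.2.2) ?_ ?_ ?_
  · rintro ⟨⟨p, q⟩, l, r⟩ hx
    simp only [mem_sigma, mem_product, mem_filter, mem_admissible,
      HasAntidiagonal.mem_antidiagonal] at hx ⊢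
    obtain ⟨hpq, ⟨⟨hlv, hlP⟩, hlroot⟩, ⟨hrv, hrP⟩, hrroot⟩ := hx
    exact ⟨⟨by simp only [vertices]; omega,
      patterns_node_subset_iff.2 ⟨hlP, hrP, hlroot, hrroot⟩⟩, rfl⟩
  · rintro ⟨⟨p, q⟩, l, r⟩ hx ⟨⟨p', q'⟩, l', r'⟩ hx' h
    simp only [mem_sigma, mem_product, mem_filter, mem_admissible,
      HasAntidiagonal.mem_antidiagonal] at hx hx'
    obtain ⟨rfl, -, rfl⟩ := node.inj h
    grind
  · intro t ht
    simp only [mem_filter, mem_admissible] at ht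
    obtain ⟨⟨hv, hP⟩, hroot⟩ := ht
    cases t with
    | leaf => simp [root?] at hroot
    | node l j r =>
      obtain rfl : j = i := by simpa [root?] using hroot
      obtain ⟨hlP, hrP, hlroot, hrroot⟩ := patterns_node_subset_iff.1 hP
      simp only [vertices] at hv
      refine ⟨⟨(l.vertices, r.vertices), l, r⟩, ?_, rfl⟩
      simp only [mem_sigma, mem_product, mem_filter, mem_admissible,
        HasAntidiagonal.mem_antidiagonal, true_and]
      exact ⟨by omega, ⟨hlP, hlroot⟩, hrP, hrroot⟩

def rootSeries (i : I) : ℚ⟦X⟧ :=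
  mk fun n => (#{t ∈ admissible P n | t.root? = some i} : ℚ)

def children (s : Side) (i : I) : Finset I := {j | (s, i, j) ∈ P}

theorem children_compl (s : Side) (i : I) : children Pᶜ s i = (children P s i)ᶜ := by
  ext j
  simp [children]

theorem mk_card_admissible_filter_forall_root (Q : I → Prop) :
    mk (fun n => (#{t ∈ admissible P n | ∀ j ∈ t.root?, Q j} : ℚ)) =
      1 + ∑ j with Q j, rootSeries P j := by
  ext n
  rw [coeff_mk, card_admissible_filter_forall_root]
  simp [rootSeries, coeff_one, map_sum]

theorem rootSeries_eq (i : I) :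
    rootSeries P i = X * ((1 + ∑ j ∈ children P .L i, rootSeries P j) *
      (1 + ∑ j ∈ children P .R i, rootSeries P j)) := by
  rw [children, children, ← mk_card_admissible_filter_forall_root,
    ← mk_card_admissible_filter_forall_root]
  ext n
  cases n with
  | zero =>
    simp only [rootSeries, coeff_mk, coeff_zero_X_mul, Nat.cast_eq_zero, card_eq_zero,
      filter_eq_empty_iff, mem_admissible]
    rintro (_ | _) <;> simp [vertices, root?]
  | succ n =>
    rw [coeff_succ_X_mul, coeff_mul, rootSeries, coeff_mk, card_admissible_root_eq_some_succ]
    push_cast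
    simp only [coeff_mk]

theorem genSeries_eq_rescale :
    genSeries P = rescale (-1) (X * (1 + ∑ i, rootSeries P i)) := by
  have h := mk_card_admissible_filter_forall_root P (fun _ => True)
  simp only [imp_true_iff, filter_true] at h
  ext m
  cases m with
  | zero => simp [genSeries]
  | succ m =>
    rw [coeff_rescale, coeff_succ_X_mul, ← h, genSeries, coeff_mk, coeff_mk, ncard_treeSet]
    simp

end

end PBTree

theorem pcomp_eq_subst {f g : PowerSeries ℚ} (hg : constantCoeff g = 0) :
    pcomp f g = f.subst g := by
  ext n
  have hvanish : ∀ d, n < d → coeff n (g ^ d) = 0 := fun d hd =>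
    coeff_of_lt_order n <| lt_of_lt_of_le (by exact_mod_cast hd)
      (le_order_pow_of_constantCoeff_eq_zero d hg)
  rw [pcomp, coeff_mk, coeff_subst' (HasSubst.of_constantCoeff_zero' hg),
    finsum_eq_sum_of_support_subset (s := range (n + 1))]
  · simp only [smul_eq_mul]
  · intro d hd
    by_contra hdn
    simp only [coe_range, Set.mem_Iio, not_lt] at hdn
    exact hd (by simp [hvanish d (by omega)])

section TreeSystem

variable {R ι : Type*} [CommRing R]

theorem eq_of_eq_X_mul_sub_sum (a : R⟦X⟧) (S : Side → ι → Finset ι) {y z : ι → R⟦X⟧}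
    (hy : ∀ i, y i = X * ((a - ∑ j ∈ S .L i, y j) * (a - ∑ j ∈ S .R i, y j)))
    (hz : ∀ i, z i = X * ((a - ∑ j ∈ S .L i, z j) * (a - ∑ j ∈ S .R i, z j))) :
    y = z := by
  suffices h : ∀ n i, coeff n (y i) = coeff n (z i) from
    funext fun i => PowerSeries.ext fun n => h n i
  intro n
  induction n using Nat.strong_induction_on with
  | _ n ih =>
    intro i
    rw [hy i, hz i]
    cases n with
    | zero => simp
    | succ m =>
      have hfactor : ∀ s, ∀ p ≤ m,
          coeff p (a - ∑ j ∈ S s i, y j) = coeff p (a - ∑ j ∈ S s i, z j) := by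
        intro s p hp
        simp only [map_sub, map_sum, ih p (by omega)]
      rw [coeff_succ_X_mul, coeff_succ_X_mul, coeff_mul, coeff_mul]
      refine sum_congr rfl fun pq hpq => ?_
      rw [HasAntidiagonal.mem_antidiagonal] at hpq
      rw [hfactor _ _ (by omega), hfactor _ _ (by omega)]

theorem subst_rescale_neg_one_of_compl [Fintype ι] [DecidableEq ι] (S : Side → ι → Finset ι)
    {C E : ι → R⟦X⟧}
    (hC : ∀ i, C i = X * ((1 + ∑ j ∈ S .L i, C j) * (1 + ∑ j ∈ S .R i, C j)))
    (hE : ∀ i, E i = X * ((1 + ∑ j ∈ (S .L i)ᶜ, E j) * (1 + ∑ j ∈ (S .R i)ᶜ, E j))) :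
    (rescale (-1) (X * (1 + ∑ i, C i))).subst (X * (1 + ∑ i, E i)) = -X := by
  set U := 1 + ∑ i, E i with hU
  have hH : HasSubst (X * U) := HasSubst.of_constantCoeff_zero' (by simp)
  set φ := substAlgHom (R := R) hH
  have hφ : ∀ f, f.subst (X * U) = φ f := fun f => by rw [coe_substAlgHom]
  have hφX : φ X = X * U := by rw [← hφ, subst_X hH]
  have hrescaleX : rescale (-1 : R) X = -X := by simp [rescale_X]
  set B := fun i => φ (rescale (-1) (C i))
  have hB : ∀ i, B i = -(X * U) * ((1 + ∑ j ∈ S .L i, B j) * (1 + ∑ j ∈ S .R i, B j)) := by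
    intro i
    simp only [B]
    conv_lhs => rw [hC i]
    simp only [map_mul, map_add, map_sum, map_one, hrescaleX, map_neg, hφX]
  have hE' : ∀ i, E i = X * ((U - ∑ j ∈ S .L i, E j) * (U - ∑ j ∈ S .R i, E j)) := by
    intro i
    have hcompl : ∀ s, U - ∑ j ∈ S s i, E j = 1 + ∑ j ∈ (S s i)ᶜ, E j := fun s => by
      rw [hU, ← sum_compl_add_sum (S s i) E]
      ring
    rw [hcompl, hcompl]
    exact hE i
  have hEB : E = fun i => -(U * B i) := by
    refine eq_of_eq_X_mul_sub_sum U S hE' fun i => ?_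
    rw [hB i]
    simp only [sum_neg_distrib, ← mul_sum]
    ring
  rw [hφ]
  calc φ (rescale (-1) (X * (1 + ∑ i, C i))) = -(X * U) * (1 + ∑ i, B i) := by
        simp only [map_mul, map_add, map_sum, map_one, hrescaleX, map_neg, hφX, B]
    _ = -X * (U - ∑ i, E i) := by
        rw [hEB]
        simp only [sum_neg_distrib, ← mul_sum]
        ring
    _ = -X := by simp [U]

end TreeSystem

/-- Main theorem: if `Z` is the complement of `X` in `Y₂ × I²`, then the alternating
generating series of `X` and `Z` are inverse to each other for composition:
`f(X, f(Z,t)) = t`. -/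
theorem genSeries_comp_complement {I : Type} [Fintype I]
    (X Z : Set (Side × I × I)) (hZ : Z = Xᶜ) :
    pcomp (genSeries X) (genSeries Z) = PowerSeries.X := by
  classical
  subst hZ
  have hH : HasSubst (PowerSeries.X * (1 + ∑ i, rootSeries Xᶜ i)) :=
    HasSubst.of_constantCoeff_zero' (by simp)
  have hneg : HasSubst ((-1 : ℚ) • (PowerSeries.X : ℚ⟦X⟧)) := HasSubst.smul_X' _
  have hXZ := subst_rescale_neg_one_of_compl (children X) (rootSeries_eq X) fun i => by
    simpa only [children_compl] using rootSeries_eq Xᶜ i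
  rw [genSeries_eq_rescale X, genSeries_eq_rescale Xᶜ, pcomp_eq_subst (by simp),
    rescale_eq_subst, ← subst_comp_subst_apply hH hneg, hXZ, ← coe_substAlgHom hneg, map_neg,
    coe_substAlgHom, subst_X hneg]
  simp
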